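/- arXiv:2601.05119 — 2 statements merged into one kernel-verified Lean document; each statement's English description precedes it below -/
import Mathlib

section
/- Let M be a loopless matroid on a finite linearly ordered ground set E, B a building set for M, N a nested set, and Z ∈ N ∖ max(B). Suppose τ_Z(N) is a nested set for the pair (M′, B|_Z ∪ B^Z), where M′ is the direct sum of M|Z and M/Z. If the NL-labeling m(N) of N has a descent at a flat X with X ≠ Z, then the NL-labeling m(τ_Z(N)) of τ_Z(N), computed with respect to (M′, B|_Z ∪ B^Z) with atoms of M′ ordered by their minimum element of E, has a descent. -/
open Set Matroid
open scoped Matroid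

variable {α : Type*}

/-- Two sets are incomparable under inclusion. -/
def Incomp (X Y : Set α) : Prop := ¬ X ⊆ Y ∧ ¬ Y ⊆ X

/-- The inclusion-maximal elements of a family of sets. -/
def maxB (B : Set (Set α)) : Set (Set α) := {X ∈ B | ∀ Y ∈ B, X ⊆ Y → X = Y}

/-- The rank of a set in a matroid: the largest size of an independent subset. -/
noncomputable def mrank (M : Matroid α) (X : Set α) : ℕ :=
  sSup {n : ℕ | ∃ I ⊆ X, M.Indep I ∧ I.ncard = n}

/-- A matroid is loopless if every singleton of the ground set is independent. -/
def MLoopless (M : Matroid α) : Prop := ∀ e ∈ M.E, M.Indep {e}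

/-- A matroid is connected if its rank function is not additive over any
separation of the ground set into two nonempty parts. -/
def MConnected (M : Matroid α) : Prop :=
  ∀ A B : Set α, A ∪ B = M.E → Disjoint A B → A.Nonempty → B.Nonempty →
    mrank M A + mrank M B ≠ mrank M M.E

/-- A building set for a matroid `M`: a set of nonempty flats containing all nonempty
flats whose restriction is connected, and closed under joins of intersecting members. -/
def IsBuildingSet (M : Matroid α) (B : Set (Set α)) : Prop :=
  (∀ X ∈ B, M.IsFlat X ∧ X.Nonempty) ∧
  (∀ X, M.IsFlat X → X.Nonempty → MConnected (M.restrict X) → X ∈ B) ∧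
  (∀ X ∈ B, ∀ Y ∈ B, (X ∩ Y).Nonempty → M.closure (X ∪ Y) ∈ B)

/-- A nested set of a building set `B`. -/
def IsNested (M : Matroid α) (B N : Set (Set α)) : Prop :=
  N ⊆ B ∧ maxB B ⊆ N ∧
  ∀ S : Set (Set α), S ⊆ N → S.Nontrivial → S.Pairwise Incomp →
    M.closure (⋃₀ S) ∉ B

/-- An inclusion-maximal nested set. -/
def IsMaxNested (M : Matroid α) (B N : Set (Set α)) : Prop :=
  IsNested M B N ∧ ∀ N', IsNested M B N' → N ⊆ N' → N' = N

/-- An atom of a matroid: a rank-one flat. -/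
def IsAtomFlat (M : Matroid α) (A : Set α) : Prop := M.IsFlat A ∧ mrank M A = 1

/-- Atoms are compared by their least elements. -/
def atomLE [Preorder α] (A A' : Set α) : Prop :=
  ∃ a a', IsLeast A a ∧ IsLeast A' a' ∧ a ≤ a'

/-- Strict comparison of atoms by their least elements. -/
def atomLT [Preorder α] (A A' : Set α) : Prop :=
  ∃ a a', IsLeast A a ∧ IsLeast A' a' ∧ a < a'

/-- `A` is an admissible label for `X` within the family `S`:
an atom contained in `X` but in no member of `S` properly below `X`. -/
def GoodLabel (M : Matroid α) (S : Set (Set α)) (X A : Set α) : Prop :=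
  IsAtomFlat M A ∧ A ⊆ X ∧ ∀ Y ∈ S, Y ⊂ X → ¬ A ⊆ Y

/-- `A` is the label `m_S(X)`: the least admissible label for `X` within `S`. -/
def IsMinLabel [Preorder α] (M : Matroid α) (S : Set (Set α)) (X A : Set α) : Prop :=
  GoodLabel M S X A ∧ ∀ A', GoodLabel M S X A' → atomLE A A'

/-- `NLListing M N R L` : `L` is the NL-listing of the remaining family `R`
(labels computed with respect to the whole family `N`), obtained by repeatedly
plucking the inclusion-minimal member with least label. -/
inductive NLListing [Preorder α] (M : Matroid α) (N : Set (Set α)) :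
    Set (Set α) → List (Set α × Set α) → Prop
  | nil : NLListing M N ∅ []
  | cons {R : Set (Set α)} {X A : Set α} {L : List (Set α × Set α)} :
      X ∈ R →
      (∀ Y ∈ R, Y ⊆ X → Y = X) →
      IsMinLabel M N X A →
      (∀ Y ∈ R, (∀ W ∈ R, W ⊆ Y → W = Y) → ∀ A', IsMinLabel M N Y A' → atomLE A A') →
      NLListing M N (R \ {X}) L →
      NLListing M N R ((X, A) :: L)

/-- A descent of a list of atoms at position `i`. -/
def HasDescentAt [Preorder α] (L : List (Set α)) (i : ℕ) : Prop :=
  ∃ h : i + 1 < L.length, atomLT (L.get ⟨i + 1, h⟩) (L.get ⟨i, Nat.lt_of_succ_lt h⟩)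

/-- The indicator vector of a set. -/
noncomputable def indVec (X : Set α) : α → ℝ := X.indicator 1

/-- `v` is the vertex of the nested set `N` for the weight vector `c`. -/
def IsVertex (M : Matroid α) (B : Set (Set α)) (c : Set α → ℝ) (N : Set (Set α))
    (v : α → ℝ) : Prop :=
  (∀ X ∈ N, ∑ᶠ a ∈ X, v a = c X) ∧
  ∃ lam mu : Set α → ℝ,
    (∀ X ∈ N \ maxB B, 0 < lam X) ∧
    v = (∑ᶠ X ∈ N \ maxB B, lam X • indVec X) + ∑ᶠ Y ∈ maxB B, mu Y • indVec Y

/-- `c` is cubical: every nested set has a unique vertex. -/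
def IsCubical (M : Matroid α) (B : Set (Set α)) (c : Set α → ℝ) : Prop :=
  ∀ N, IsNested M B N → ∃! v, IsVertex M B c N v

/-- Lexicographic comparison of vectors in `ℝ^E`. -/
def lexLt [LinearOrder α] (u v : α → ℝ) : Prop :=
  ∃ i, u i < v i ∧ ∀ j, j < i → u j = v j

open Classical in
/-- The map `τ_Z`. -/
noncomputable def tau (M : Matroid α) (Z X : Set α) : Set α :=
  if X ⊆ Z then X else M.closure (X ∪ Z) \ Z

/-- `MZ` is the contraction `M ／ Z`. -/
def IsContraction (M MZ : Matroid α) (Z : Set α) : Prop :=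
  MZ.E = M.E \ Z ∧
  ∀ I : Set α, MZ.Indep I ↔ I ⊆ M.E \ Z ∧ ∃ J, M.IsBasis J Z ∧ M.Indep (I ∪ J)

set_option linter.unusedSectionVars false
set_option maxHeartbeats 1000000

section PartB
variable [Fintype α] {M : Matroid α} {I J X Y F : Set α}

lemma flat_closure (M : Matroid α) (X : Set α) : M.IsFlat (M.closure X) := by
  refine ⟨fun I X' h1 h2 => h2.subset_closure.trans ?_, M.closure_subset_ground X⟩
  rw [h1.closure_eq_closure, closure_closure]

lemma mrank_eq_ncard_basis' (hI : M.IsBasis' I X) : mrank M X = I.ncard := by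
  refine IsGreatest.csSup_eq ⟨⟨I, hI.subset, hI.indep, rfl⟩, ?_⟩
  rintro n ⟨J, hJX, hJ, rfl⟩
  obtain ⟨I', hI', hJI'⟩ := hJ.subset_isBasis'_of_subset hJX
  have h2 : I'.ncard = I.ncard := by
    rw [Set.ncard_def, hI'.encard_eq_encard hI, ← Set.ncard_def]
  have h1 : J.ncard ≤ I'.ncard := Set.ncard_le_ncard hJI' I'.toFinite
  omega

lemma mrank_indep (hI : M.Indep I) : mrank M I = I.ncard :=
  mrank_eq_ncard_basis' hI.isBasis_self.isBasis'

lemma mrank_le_of_indep_subset (hJ : M.Indep J) (hJX : J ⊆ X) : J.ncard ≤ mrank M X := by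
  obtain ⟨I, hI⟩ := M.exists_isBasis' X
  rw [mrank_eq_ncard_basis' hI]
  obtain ⟨I', hI', hJI'⟩ := hJ.subset_isBasis'_of_subset hJX
  have h2 : I'.ncard = I.ncard := by
    rw [Set.ncard_def, hI'.encard_eq_encard hI, ← Set.ncard_def]
  have h1 : J.ncard ≤ I'.ncard := Set.ncard_le_ncard hJI' I'.toFinite
  omega

lemma mrank_mono (hXY : X ⊆ Y) : mrank M X ≤ mrank M Y := by
  obtain ⟨I, hI⟩ := M.exists_isBasis' X
  rw [mrank_eq_ncard_basis' hI]
  exact mrank_le_of_indep_subset hI.indep (hI.subset.trans hXY)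

lemma mrank_closure_eq (M : Matroid α) (X : Set α) : mrank M (M.closure X) = mrank M X := by
  obtain ⟨I, hI⟩ := M.exists_isBasis' X
  rw [mrank_eq_ncard_basis' hI, mrank_eq_ncard_basis' hI.isBasis_closure_right.isBasis']

lemma mrank_le_of_subset_closure (h : X ⊆ M.closure Y) : mrank M X ≤ mrank M Y := by
  rw [← mrank_closure_eq M Y]; exact mrank_mono h

lemma mrank_submod (M : Matroid α) (X Y : Set α) :
    mrank M (X ∪ Y) + mrank M (X ∩ Y) ≤ mrank M X + mrank M Y := by
  obtain ⟨I, hI⟩ := M.exists_isBasis' (X ∩ Y)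
  obtain ⟨J, hJ, hIJ⟩ := hI.indep.subset_isBasis'_of_subset
    (hI.subset.trans (inter_subset_left.trans subset_union_left))
  rw [mrank_eq_ncard_basis' hI, mrank_eq_ncard_basis' hJ]
  have h1 : (J ∩ X).ncard + (J ∩ Y).ncard = ((J ∩ X) ∪ (J ∩ Y)).ncard + ((J ∩ X) ∩ (J ∩ Y)).ncard :=
    (Set.ncard_union_add_ncard_inter _ _ (J ∩ X).toFinite (J ∩ Y).toFinite).symm
  have h2 : (J ∩ X) ∪ (J ∩ Y) = J := by
    rw [← inter_union_distrib_left]; exact inter_eq_left.mpr hJ.subset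
  have h3 : (J ∩ X) ∩ (J ∩ Y) = J ∩ (X ∩ Y) := by rw [inter_inter_inter_comm, inter_self]
  have h4 : I ⊆ J ∩ (X ∩ Y) := subset_inter hIJ hI.subset
  have h5 : I.ncard ≤ (J ∩ (X ∩ Y)).ncard := Set.ncard_le_ncard h4 (J ∩ (X ∩ Y)).toFinite
  have h6 : (J ∩ X).ncard ≤ mrank M X :=
    mrank_le_of_indep_subset (hJ.indep.subset inter_subset_left) inter_subset_right
  have h7 : (J ∩ Y).ncard ≤ mrank M Y :=
    mrank_le_of_indep_subset (hJ.indep.subset inter_subset_left) inter_subset_right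
  rw [h2, h3] at h1
  omega

end PartB

section PartC
variable [Fintype α] {M : Matroid α} {A F I X : Set α} {e x y : α}

set_option linter.unusedSectionVars false

lemma MLoopless.closure_empty (hM : MLoopless M) : M.closure ∅ = ∅ := by
  ext e
  simp only [mem_empty_iff_false, iff_false]
  intro he
  have heE : e ∈ M.E := mem_ground_of_mem_closure he
  rw [M.empty_indep.mem_closure_iff] at he
  rcases he with h | h
  · rw [insert_empty_eq] at h
    exact h.not_indep (hM e heE)
  · exact h

lemma MLoopless.indep_singleton (hM : MLoopless M) (he : e ∈ M.E) : M.Indep {e} := hM e he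

lemma mrank_closure_singleton (hM : MLoopless M) (he : e ∈ M.E) :
    mrank M (M.closure {e}) = 1 := by
  rw [mrank_closure_eq, mrank_indep (hM e he), Set.ncard_singleton]

lemma closure_singleton_atom (hM : MLoopless M) (he : e ∈ M.E) :
    IsAtomFlat M (M.closure {e}) :=
  ⟨flat_closure M {e}, mrank_closure_singleton hM he⟩

lemma IsAtomFlat.nonempty (hA : IsAtomFlat M A) : A.Nonempty := by
  rcases A.eq_empty_or_nonempty with rfl | h
  · have := hA.2
    rw [mrank_indep M.empty_indep, Set.ncard_empty] at this
    exact absurd this (by norm_num)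
  · exact h

lemma IsAtomFlat.eq_closure_of_mem (hM : MLoopless M) (hA : IsAtomFlat M A) (hx : x ∈ A) :
    A = M.closure {x} := by
  have hxE : x ∈ M.E := hA.1.subset_ground hx
  have h1 : M.closure {x} ⊆ A := by
    have := M.closure_subset_closure (singleton_subset_iff.mpr hx)
    rwa [hA.1.closure] at this
  refine (subset_antisymm ?_ h1)
  by_contra hsub
  obtain ⟨y, hyA, hycl⟩ := not_subset.mp hsub
  have hyx : y ≠ x := fun h => hycl (h ▸ M.mem_closure_self x hxE)
  have hyE : y ∈ M.E := hA.1.subset_ground hyA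
  have hpair : M.Indep {x, y} := by
    rw [show ({x, y} : Set α) = insert y {x} by ext; simp; tauto]
    rw [(hM x hxE).insert_indep_iff_of_notMem (by simp [hyx])]
    exact ⟨hyE, hycl⟩
  have h2 : ({x, y} : Set α).ncard ≤ mrank M A :=
    mrank_le_of_indep_subset hpair (by rw [insert_subset_iff]; exact ⟨hx, singleton_subset_iff.mpr hyA⟩)
  rw [Set.ncard_pair hyx.symm, hA.2] at h2
  omega

lemma IsAtomFlat.subset_flat (hM : MLoopless M) (hA : IsAtomFlat M A) (hF : M.IsFlat F)
    (hx : x ∈ A) (hxF : x ∈ F) : A ⊆ F := by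
  rw [hA.eq_closure_of_mem hM hx, ← hF.closure]
  exact M.closure_subset_closure (singleton_subset_iff.mpr hxF)

end PartC

section PartE
variable [Fintype α] {M : Matroid α} {C' A F I X Y R S : Set α} {e x y : α}

lemma mrank_restrict_eq (M : Matroid α) {S R : Set α} (hSR : S ⊆ R) :
    mrank (M.restrict R) S = mrank M S := by
  unfold mrank
  congr 1
  ext n
  constructor
  · rintro ⟨I, hIS, hind, rfl⟩
    exact ⟨I, hIS, (restrict_indep_iff.mp hind).1, rfl⟩
  · rintro ⟨I, hIS, hind, rfl⟩
    exact ⟨I, hIS, restrict_indep_iff.mpr ⟨hind, hIS.trans hSR⟩, rfl⟩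

lemma conn_of_circuit (hM : MLoopless M) (hC' : M.Indep C') (he : e ∈ M.closure C')
    (heC' : e ∉ C') (hmin : ∀ c ∈ C', e ∉ M.closure (C' \ {c})) :
    MConnected (M.restrict (M.closure C')) := by
  set F := M.closure C' with hF
  intro A Bs hAB hdisj hA hB hsum
  rw [restrict_ground_eq] at hAB
  have hAF : A ⊆ F := hAB ▸ subset_union_left
  have hBF : Bs ⊆ F := hAB ▸ subset_union_right
  rw [mrank_restrict_eq M hAF, mrank_restrict_eq M hBF, restrict_ground_eq,
    mrank_restrict_eq M Subset.rfl] at hsum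
  -- separation restricted to subsets
  have step1 : ∀ X ⊆ A, mrank M (X ∪ Bs) = mrank M X + mrank M Bs := by
    intro X hX
    have hle := mrank_submod M X Bs
    have hsub2 := mrank_submod M (X ∪ Bs) A
    have h1 : (X ∪ Bs) ∪ A = F := by
      rw [← hAB]
      ext t
      simp only [mem_union]
      constructor
      · rintro ((h | h) | h)
        exacts [Or.inl (hX h), Or.inr h, Or.inl h]
      · rintro (h | h)
        exacts [Or.inr h, Or.inl (Or.inr h)]
    have h2 : (X ∪ Bs) ∩ A = X := by
      rw [union_inter_distrib_right, inter_eq_left.mpr hX,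
        (hdisj.symm.mono_left Subset.rfl).inter_eq, union_empty]
    rw [h1, h2] at hsub2
    omega
  have hE0b : ∀ X Y, X ⊆ A → Y ⊆ Bs → mrank M (X ∪ Y) = mrank M X + mrank M Y := by
    intro X Y hX hY
    have s1 := step1 X hX
    have hle := mrank_submod M X Y
    have hsub3 := mrank_submod M (X ∪ Y) Bs
    have h1 : (X ∪ Y) ∪ Bs = X ∪ Bs := by
      rw [union_assoc, union_eq_self_of_subset_left hY]
    have h2 : (X ∪ Y) ∩ Bs = Y := by
      rw [union_inter_distrib_right, inter_eq_left.mpr hY,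
        ((hdisj.mono_left hX).mono_right Subset.rfl).inter_eq, empty_union]
    rw [h1, h2] at hsub3
    omega
  have hE0c : ∀ D : Set α, D ⊆ F → (D ∩ A).Nonempty → (D ∩ Bs).Nonempty →
      (∀ d ∈ D, M.Indep (D \ {d})) → mrank M D < D.ncard → False := by
    intro D hDF hDA hDB hprop hr
    obtain ⟨dB, hdB⟩ := hDB
    obtain ⟨dA, hdA⟩ := hDA
    have hDAind : M.Indep (D ∩ A) := (hprop dB hdB.1).subset (by
      intro t ht
      refine ⟨ht.1, ?_⟩
      simp only [mem_singleton_iff]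
      rintro rfl
      exact (hdisj.ne_of_mem ht.2 hdB.2) rfl)
    have hDBind : M.Indep (D ∩ Bs) := (hprop dA hdA.1).subset (by
      intro t ht
      refine ⟨ht.1, ?_⟩
      simp only [mem_singleton_iff]
      rintro rfl
      exact (hdisj.ne_of_mem hdA.2 ht.2) rfl)
    have heq := hE0b (D ∩ A) (D ∩ Bs) inter_subset_right inter_subset_right
    have hun : (D ∩ A) ∪ (D ∩ Bs) = D := by
      rw [← inter_union_distrib_left, hAB]
      exact inter_eq_left.mpr hDF
    have hdisj2 : Disjoint (D ∩ A) (D ∩ Bs) :=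
      (hdisj.mono inter_subset_right inter_subset_right)
    have hcard : (D ∩ A).ncard + (D ∩ Bs).ncard = D.ncard := by
      rw [← Set.ncard_union_eq hdisj2 (D ∩ A).toFinite (D ∩ Bs).toFinite, hun]
    rw [hun, mrank_indep hDAind, mrank_indep hDBind] at heq
    omega
  have heE := mem_ground_of_mem_closure he
  set C := insert e C' with hC
  have hC'E : C' ⊆ M.E := hC'.subset_ground
  have hC'F : C' ⊆ F := M.subset_closure C' hC'E
  have hCF : C ⊆ F := insert_subset he hC'F
  have hprop : ∀ d ∈ C, M.Indep (C \ {d}) := by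
    intro d hd
    rcases eq_or_ne d e with rfl | hne
    · rw [hC, insert_diff_self_of_notMem heC']
      exact hC'
    · have hdC' : d ∈ C' := by
        rcases hd with h | h
        · exact absurd h hne
        · exact h
      have hset : C \ {d} = insert e (C' \ {d}) := by
        ext t
        simp only [hC, mem_diff, mem_insert_iff, mem_singleton_iff]
        constructor
        · rintro ⟨h | h, h2⟩
          exacts [Or.inl h, Or.inr ⟨h, h2⟩]
        · rintro (rfl | ⟨h, h2⟩)
          exacts [⟨Or.inl rfl, hne.symm⟩, ⟨Or.inr h, h2⟩]
      rw [hset]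
      refine ((hC'.subset diff_subset).insert_indep_iff_of_notMem
        (fun h => heC' (diff_subset h))).mpr ⟨heE, hmin d hdC'⟩
  have hrC : mrank M C < C.ncard := by
    have h1 : mrank M C ≤ mrank M C' := mrank_le_of_subset_closure hCF
    rw [mrank_indep hC'] at h1
    have hnc : C.ncard = C'.ncard + 1 := by
      rw [hC, Set.ncard_insert_of_notMem heC' C'.toFinite]
    omega
  have hCA : C ⊆ A ∨ C ⊆ Bs ∨ ((C ∩ A).Nonempty ∧ (C ∩ Bs).Nonempty) := by
    rcases (C ∩ A).eq_empty_or_nonempty with h1 | h1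
    · refine Or.inr (Or.inl fun t ht => ?_)
      have : t ∈ A ∪ Bs := hAB.symm ▸ hCF ht
      rcases this with h | h
      · exact absurd (show t ∈ C ∩ A from ⟨ht, h⟩) (by rw [h1]; exact notMem_empty t)
      · exact h
    rcases (C ∩ Bs).eq_empty_or_nonempty with h2 | h2
    · refine Or.inl fun t ht => ?_
      have : t ∈ A ∪ Bs := hAB.symm ▸ hCF ht
      rcases this with h | h
      · exact h
      · exact absurd (show t ∈ C ∩ Bs from ⟨ht, h⟩) (by rw [h2]; exact notMem_empty t)
    exact Or.inr (Or.inr ⟨h1, h2⟩)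
  -- the "one side" blocks
  have block : ∀ A' B' : Set α, C ⊆ A' → B'.Nonempty → B' ⊆ F →
      Disjoint A' B' →
      (∀ D : Set α, D ⊆ F → (D ∩ A').Nonempty → (D ∩ B').Nonempty →
        (∀ d ∈ D, M.Indep (D \ {d})) → mrank M D < D.ncard → False) → False := by
    intro A' B' hCA' hB' hB'F hdisj' hE0c'
    obtain ⟨b0, hb0⟩ := hB'
    have hb0F : b0 ∈ F := hB'F hb0
    have hb0E : b0 ∈ M.E := (M.closure_subset_ground C') hb0F
    have h𝒟 : ({D | D ⊆ C' ∧ b0 ∈ M.closure D} : Set (Set α)).Nonempty :=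
      ⟨C', Subset.rfl, hb0F⟩
    obtain ⟨D0, hD0, hminD⟩ := Set.exists_min_image _ Set.ncard
      (Set.toFinite {D | D ⊆ C' ∧ b0 ∈ M.closure D}) h𝒟
    have hD0C' : D0 ⊆ C' := hD0.1
    have hb0D0cl : b0 ∈ M.closure D0 := hD0.2
    have hD0A' : D0 ⊆ A' := (hD0C'.trans (subset_insert e C')).trans hCA'
    have hb0D0 : b0 ∉ D0 := fun h => (hdisj'.ne_of_mem (hD0A' h) hb0) rfl
    have hminD' : ∀ c ∈ D0, b0 ∉ M.closure (D0 \ {c}) := by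
      intro c hc hmem
      have hmem2 : (D0 \ {c}) ∈ {D | D ⊆ C' ∧ b0 ∈ M.closure D} :=
        ⟨diff_subset.trans hD0C', hmem⟩
      have h2 := hminD _ hmem2
      have h3 : (D0 \ {c}).ncard < D0.ncard := Set.ncard_diff_singleton_lt_of_mem hc D0.toFinite
      omega
    have hD0ne : D0.Nonempty := by
      rcases D0.eq_empty_or_nonempty with rfl | h
      · rw [hM.closure_empty] at hb0D0cl
        exact absurd hb0D0cl (notMem_empty b0)
      · exact h
    have hD0ind : M.Indep D0 := hC'.subset hD0C'
    have hD0cl : insert b0 D0 ⊆ M.closure D0 :=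
      insert_subset hb0D0cl (M.subset_closure D0 hD0ind.subset_ground)
    refine hE0c' (insert b0 D0) ?_ ?_ ?_ ?_ ?_
    · exact insert_subset hb0F ((hD0C'.trans hC'F))
    · obtain ⟨d, hd⟩ := hD0ne
      exact ⟨d, Or.inr hd, hD0A' hd⟩
    · exact ⟨b0, Or.inl rfl, hb0⟩
    · intro d hd
      rcases eq_or_ne d b0 with rfl | hne
      · rw [insert_diff_self_of_notMem hb0D0]
        exact hD0ind
      · have hdD0 : d ∈ D0 := by
          rcases hd with h | h
          · exact absurd h hne
          · exact h
        have hset : insert b0 D0 \ {d} = insert b0 (D0 \ {d}) := by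
          ext t
          simp only [mem_diff, mem_insert_iff, mem_singleton_iff]
          constructor
          · rintro ⟨h | h, h2⟩
            exacts [Or.inl h, Or.inr ⟨h, h2⟩]
          · rintro (rfl | ⟨h, h2⟩)
            exacts [⟨Or.inl rfl, hne.symm⟩, ⟨Or.inr h, h2⟩]
        rw [hset]
        exact ((hD0ind.subset diff_subset).insert_indep_iff_of_notMem
          (fun h => hb0D0 (diff_subset h))).mpr ⟨hb0E, hminD' d hdD0⟩
    · have h1 : mrank M (insert b0 D0) ≤ mrank M D0 := mrank_le_of_subset_closure hD0cl
      rw [mrank_indep hD0ind] at h1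
      rw [Set.ncard_insert_of_notMem hb0D0 D0.toFinite]
      omega
  rcases hCA with h | h | ⟨h1, h2⟩
  · exact block A Bs h hB hBF hdisj hE0c
  · refine block Bs A h hA hAF hdisj.symm ?_
    intro D hDF hDB hDA hprop' hr
    exact hE0c D hDF hDA hDB hprop' hr
  · exact hE0c C hCF h1 h2 hprop hrC
end PartE

section PartG
variable [Fintype α] [LinearOrder α] {M : Matroid α} {S R : Set (Set α)}
  {L : List (Set α × Set α)} {X A U V : Set α}

lemma exists_isLeast {A : Set α} (h : A.Nonempty) : ∃ a, IsLeast A a := by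
  obtain ⟨a, ha, hmin⟩ := Set.exists_min_image A id (Set.toFinite A) h
  exact ⟨a, ha, fun b hb => hmin b hb⟩

lemma atomLE_trans {A B C : Set α} (h1 : atomLE A B) (h2 : atomLE B C) : atomLE A C := by
  obtain ⟨a, b, ha, hb, hab⟩ := h1
  obtain ⟨b', c, hb', hc, hbc⟩ := h2
  exact ⟨a, c, ha, hc, le_trans hab (hb.unique hb' ▸ hbc)⟩

lemma atomLT_of_le_of_lt {A B C : Set α} (h1 : atomLE A B) (h2 : atomLT B C) : atomLT A C := by
  obtain ⟨a, b, ha, hb, hab⟩ := h1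
  obtain ⟨b', c, hb', hc, hbc⟩ := h2
  exact ⟨a, c, ha, hc, lt_of_le_of_lt (hb.unique hb' ▸ hab) hbc⟩

lemma atomLT_asymm_of_LE {A B : Set α} (h1 : atomLT A B) (h2 : atomLE B A) : False := by
  obtain ⟨a, b, ha, hb, hab⟩ := h1
  obtain ⟨b', a', hb', ha', hba⟩ := h2
  rw [ha.unique ha', hb.unique hb'] at hab
  exact absurd hba (not_le_of_gt hab)

lemma NL_cons_inv {p : Set α × Set α} (h : NLListing M S R (p :: L)) :
    p.1 ∈ R ∧ (∀ Y ∈ R, Y ⊆ p.1 → Y = p.1) ∧ IsMinLabel M S p.1 p.2 ∧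
    (∀ Y ∈ R, (∀ W ∈ R, W ⊆ Y → W = Y) → ∀ A', IsMinLabel M S Y A' → atomLE p.2 A') ∧
    NLListing M S (R \ {p.1}) L := by
  cases h with
  | cons h1 h2 h3 h4 h5 => exact ⟨h1, h2, h3, h4, h5⟩

lemma NL_nil_inv (h : NLListing M S R []) : R = ∅ := by
  cases h; rfl

lemma NL_drop (h : NLListing M S R L) (i : ℕ) :
    ∃ R', NLListing M S R' (L.drop i) ∧ R' ⊆ R ∧
      ∀ T ∈ R, T ∉ R' → ∀ W ∈ R', W ⊆ T → W = T := by
  induction i with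
  | zero => exact ⟨R, by simpa using h, Subset.rfl, fun T hT hT' => absurd hT hT'⟩
  | succ n ih =>
    obtain ⟨R', h', hsub, hinv⟩ := ih
    have hdd : L.drop (n+1) = (L.drop n).drop 1 := by
      rw [List.drop_drop, Nat.add_comm]
    cases hL : L.drop n with
    | nil =>
      rw [hL] at h'
      rw [hdd, hL]
      have hR' := NL_nil_inv h'
      subst hR'
      exact ⟨∅, NLListing.nil, empty_subset R, fun T hT hT' W hW => absurd hW (notMem_empty W)⟩
    | cons p L'' =>
      rw [hL] at h'
      obtain ⟨hp, hmin, hlab, hcond, hrest⟩ := NL_cons_inv h'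
      rw [hdd, hL]
      refine ⟨R' \ {p.1}, by simpa using hrest, diff_subset.trans hsub, ?_⟩
      intro T hT hT' W hW hWT
      by_cases hTR' : T ∈ R'
      · have hTp : T = p.1 := by
          by_contra hne
          exact hT' ⟨hTR', hne⟩
        exact hTp ▸ hmin W (diff_subset hW) (hTp ▸ hWT)
      · exact hinv T hT hTR' W (diff_subset hW) hWT

lemma NL_mem_at (h : NLListing M S R L) (i : ℕ) (hi : i < L.length) :
    (L.get ⟨i, hi⟩).1 ∈ R ∧ IsMinLabel M S (L.get ⟨i, hi⟩).1 (L.get ⟨i, hi⟩).2 := by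
  obtain ⟨R', h', hsub, _⟩ := NL_drop h i
  rw [List.drop_eq_getElem_cons hi] at h'
  obtain ⟨hp, _, hlab, _, _⟩ := NL_cons_inv h'
  simp only [List.get_eq_getElem]
  exact ⟨hsub hp, hlab⟩

lemma NL_exists_index (h : NLListing M S R L) (hX : X ∈ R) :
    ∃ i, ∃ hi : i < L.length, (L.get ⟨i, hi⟩).1 = X := by
  induction h with
  | nil => exact absurd hX (notMem_empty X)
  | @cons R' X' A' L' h1 h2 h3 h4 h5 ih =>
    rcases eq_or_ne X X' with rfl | hne
    · exact ⟨0, by simp, rfl⟩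
    · obtain ⟨i, hi, hget⟩ := ih ⟨hX, hne⟩
      exact ⟨i + 1, by simpa using Nat.succ_lt_succ hi, by simpa using hget⟩

lemma NL_order (h : NLListing M S R L) {i j : ℕ} (hi : i < L.length) (hj : j < L.length)
    (hU : (L.get ⟨i, hi⟩).1 = U) (hV : (L.get ⟨j, hj⟩).1 = V) (hUV : U ⊂ V) : i < j := by
  by_contra hle
  push_neg at hle
  rcases eq_or_lt_of_le hle with rfl | hlt
  · rw [hU] at hV
    exact absurd (hV ▸ hUV) (ssubset_irrefl V)
  obtain ⟨R', h', hsub, _⟩ := NL_drop h j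
  rw [List.drop_eq_getElem_cons hj] at h'
  obtain ⟨hp, hmin, _, _, hrest⟩ := NL_cons_inv h'
  have hlen : (i - (j+1)) < (L.drop (j+1)).length := by
    rw [List.length_drop]
    omega
  have hUmem := (NL_mem_at hrest _ hlen).1
  have hUin : ((L.drop (j+1)).get ⟨i - (j+1), hlen⟩).1 = U := by
    have hidx : j + 1 + (i - (j + 1)) = i := by omega
    simp only [List.get_eq_getElem, List.getElem_drop, hidx]
    simpa using hU
  rw [hUin] at hUmem
  have hUR' : U ∈ R' := diff_subset hUmem
  have hUeq : U = (L[j]'hj).1 := hmin U hUR' (by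
    simp only [List.get_eq_getElem] at hV
    rw [hV]
    exact hUV.subset)
  simp only [List.get_eq_getElem] at hV
  rw [hV] at hUeq
  exact hUV.ne hUeq

lemma NL_step (h : NLListing M S R L) (hnd : ∀ k, ¬ HasDescentAt (L.map Prod.snd) k)
    (k : ℕ) (hk : k + 1 < L.length) :
    atomLE (L.get ⟨k, Nat.lt_of_succ_lt hk⟩).2 (L.get ⟨k+1, hk⟩).2 := by
  obtain ⟨a, ha⟩ := exists_isLeast ((NL_mem_at h k (Nat.lt_of_succ_lt hk)).2.1.1.nonempty)
  obtain ⟨b, hb⟩ := exists_isLeast ((NL_mem_at h (k+1) hk).2.1.1.nonempty)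
  have hklen : k + 1 < (L.map Prod.snd).length := by simpa using hk
  have hm1 : (L.map Prod.snd).get ⟨k+1, hklen⟩ = (L.get ⟨k+1, hk⟩).2 := by simp
  have hm2 : (L.map Prod.snd).get ⟨k, Nat.lt_of_succ_lt hklen⟩ =
      (L.get ⟨k, Nat.lt_of_succ_lt hk⟩).2 := by simp
  refine ⟨a, b, ha, hb, ?_⟩
  by_contra hab
  push_neg at hab
  exact hnd k ⟨hklen, by rw [hm1, hm2]; exact ⟨b, a, hb, ha, hab⟩⟩

lemma NL_mono_aux (h : NLListing M S R L) (hnd : ∀ k, ¬ HasDescentAt (L.map Prod.snd) k)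
    (d : ℕ) : ∀ k (hk : k + d < L.length),
    atomLE (L.get ⟨k, by omega⟩).2 (L.get ⟨k + d, hk⟩).2 := by
  induction d with
  | zero =>
    intro k hk
    obtain ⟨a, ha⟩ := exists_isLeast ((NL_mem_at h k (by omega)).2.1.1.nonempty)
    exact ⟨a, a, ha, ha, le_rfl⟩
  | succ n ih =>
    intro k hk
    have h1 := ih k (by omega)
    have h2 := NL_step h hnd (k + n) hk
    exact atomLE_trans h1 h2

lemma NL_mono (h : NLListing M S R L) (hnd : ∀ k, ¬ HasDescentAt (L.map Prod.snd) k)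
    {i j : ℕ} (hij : i ≤ j) (hj : j < L.length) :
    atomLE (L.get ⟨i, lt_of_le_of_lt hij hj⟩).2 (L.get ⟨j, hj⟩).2 := by
  have h1 := NL_mono_aux h hnd (j - i) i (by omega)
  simp only [Nat.add_sub_cancel' hij] at h1
  exact h1

lemma NL_crossed (h : NLListing M S S L) (hU : U ∈ S) (hV : V ∈ S) (hUV : U ⊂ V)
    {Ag : Set α} (hAg : GoodLabel M S V Ag)
    (hlow : ∀ A', GoodLabel M S U A' → atomLT Ag A') :
    ∃ i, HasDescentAt (L.map Prod.snd) i := by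
  by_contra hnone
  push_neg at hnone
  obtain ⟨iU, hiU, hgU⟩ := NL_exists_index h hU
  obtain ⟨iV, hiV, hgV⟩ := NL_exists_index h hV
  have hord : iU < iV := NL_order h hiU hiV hgU hgV hUV
  have hmono := NL_mono h hnone (le_of_lt hord) hiV
  have hlabU := (NL_mem_at h iU hiU).2
  have hlabV := (NL_mem_at h iV hiV).2
  rw [hgU] at hlabU
  rw [hgV] at hlabV
  have h1 : atomLT Ag (L.get ⟨iU, hiU⟩).2 := hlow _ hlabU.1
  have h2 : atomLE (L.get ⟨iV, hiV⟩).2 Ag := hlabV.2 Ag hAg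
  exact atomLT_asymm_of_LE (atomLT_of_le_of_lt h2 h1) hmono

end PartG

section PartF
variable [Fintype α] {M MZ : Matroid α} {Z A F G I X : Set α}
  {hdisj : Disjoint (M.restrict Z).E MZ.E} {e x : α}

lemma hdZ (hdisj : Disjoint (M.restrict Z).E MZ.E) : Disjoint Z MZ.E := by
  rwa [restrict_ground_eq] at hdisj

lemma mz_loopless (hM : MLoopless M) (hZflat : M.IsFlat Z) (hMZ : IsContraction M MZ Z) :
    MLoopless MZ := by
  intro e he
  rw [hMZ.1] at he
  obtain ⟨J, hJ⟩ := M.exists_isBasis Z hZflat.subset_ground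
  have heJ : e ∉ M.closure J := by
    rw [hJ.closure_eq_closure, hZflat.closure]
    exact he.2
  have hins : M.Indep (insert e J) := by
    refine (hJ.indep.insert_indep_iff_of_notMem ?_).mpr ⟨he.1, heJ⟩
    exact fun h => he.2 (hJ.subset h)
  exact (hMZ.2 {e}).mpr ⟨singleton_subset_iff.mpr he, J, hJ, by rwa [singleton_union]⟩

lemma dsum_ground_eq' : (Matroid.disjointSum (M.restrict Z) MZ hdisj).E = Z ∪ MZ.E := by
  rw [disjointSum_ground_eq, restrict_ground_eq]

lemma dsum_indep_left (hIZ : I ⊆ Z) :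
    (Matroid.disjointSum (M.restrict Z) MZ hdisj).Indep I ↔ M.Indep I := by
  rw [disjointSum_indep_iff, restrict_ground_eq]
  constructor
  · rintro ⟨h1, _, _⟩
    rw [inter_eq_left.mpr hIZ] at h1
    exact (restrict_indep_iff.mp h1).1
  · intro h
    refine ⟨?_, ?_, hIZ.trans subset_union_left⟩
    · rw [inter_eq_left.mpr hIZ]
      exact restrict_indep_iff.mpr ⟨h, hIZ⟩
    · rw [((hdZ hdisj).mono_left hIZ).inter_eq]
      exact MZ.empty_indep

lemma dsum_loopless (hM : MLoopless M) (hZflat : M.IsFlat Z) (hMZ : IsContraction M MZ Z) :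
    MLoopless (Matroid.disjointSum (M.restrict Z) MZ hdisj) := by
  intro e he
  rw [dsum_ground_eq'] at he
  rcases he with heZ | heMZ
  · exact (dsum_indep_left (singleton_subset_iff.mpr heZ)).mpr
      (hM e (hZflat.subset_ground heZ))
  · rw [disjointSum_indep_iff, restrict_ground_eq]
    refine ⟨?_, ?_, ?_⟩
    · rw [(disjoint_singleton_left.mpr (fun h => (hdZ hdisj).ne_of_mem h heMZ rfl)).inter_eq]
      exact (M.restrict Z).empty_indep
    · rw [inter_eq_left.mpr (singleton_subset_iff.mpr heMZ)]
      exact mz_loopless hM hZflat hMZ e heMZ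
    · exact singleton_subset_iff.mpr (Or.inr heMZ)

lemma dsum_basis_left (hIF : M.IsBasis I F) (hFZ : F ⊆ Z) (hZE : Z ⊆ M.E) :
    (Matroid.disjointSum (M.restrict Z) MZ hdisj).IsBasis I F := by
  rw [disjointSum_isBasis_iff, restrict_ground_eq]
  have hIZ : I ⊆ Z := hIF.subset.trans hFZ
  refine ⟨?_, ?_, hIF.subset, ?_⟩
  · rw [inter_eq_left.mpr hIZ, inter_eq_left.mpr hFZ]
    exact (isBasis_restrict_iff hZE).mpr ⟨hIF, hFZ⟩
  · rw [((hdZ hdisj).mono_left hIZ).inter_eq, ((hdZ hdisj).mono_left hFZ).inter_eq]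
    exact MZ.empty_indep.isBasis_self
  · exact hFZ.trans subset_union_left

lemma dsum_flat_left (hM : MLoopless M) (hZflat : M.IsFlat Z) (hMZ : IsContraction M MZ Z)
    (hF : M.IsFlat F) (hFZ : F ⊆ Z) :
    (Matroid.disjointSum (M.restrict Z) MZ hdisj).IsFlat F := by
  set M' := Matroid.disjointSum (M.restrict Z) MZ hdisj with hM'
  obtain ⟨I, hI⟩ := M.exists_isBasis F hF.subset_ground
  have hB' : M'.IsBasis I F := dsum_basis_left hI hFZ hZflat.subset_ground
  have hcl : M'.closure F = F := by
    refine subset_antisymm ?_ (M'.subset_closure F (hFZ.trans (subset_union_left.trans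
      dsum_ground_eq'.symm.subset)))
    rw [← hB'.closure_eq_closure]
    intro e he
    by_cases heI : e ∈ I
    · exact hI.subset heI
    have heE' : e ∈ M'.E := mem_ground_of_mem_closure he
    rw [hB'.indep.mem_closure_iff] at he
    rcases he with hdep | heI2
    swap
    · exact absurd heI2 heI
    rw [dsum_ground_eq'] at heE'
    rcases heE' with heZ | heMZ
    · have hIZ : I ⊆ Z := hI.subset.trans hFZ
      have hdepM : M.Dep (insert e I) := by
        rw [Dep, and_iff_left (insert_subset (hZflat.subset_ground heZ) (hI.indep.subset_ground))]
        intro hind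
        exact hdep.not_indep ((dsum_indep_left (insert_subset heZ hIZ)).mpr hind)
      have := hI.indep.insert_dep_iff.mp hdepM
      rw [hI.closure_eq_closure, hF.closure] at this
      exact this.1
    · exfalso
      refine hdep.not_indep ?_
      rw [hM', disjointSum_indep_iff, restrict_ground_eq]
      have heZ' : e ∉ Z := fun h => (hdZ hdisj).ne_of_mem h heMZ rfl
      have hIZ : I ⊆ Z := hI.subset.trans hFZ
      refine ⟨?_, ?_, ?_⟩
      · have : insert e I ∩ Z = I := by
          ext t
          simp only [mem_inter_iff, mem_insert_iff, mem_singleton_iff]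
          constructor
          · rintro ⟨rfl | h, h2⟩
            · exact absurd h2 heZ'
            · exact h
          · intro h
            exact ⟨Or.inr h, hIZ h⟩
        rw [this]
        exact restrict_indep_iff.mpr ⟨hI.indep, hIZ⟩
      · have : insert e I ∩ MZ.E = {e} := by
          ext t
          simp only [mem_inter_iff, mem_insert_iff, mem_singleton_iff]
          constructor
          · rintro ⟨rfl | h, h2⟩
            · rfl
            · exact absurd ((hdZ hdisj).ne_of_mem (hIZ h) h2) (by simp)
          · rintro rfl
            exact ⟨Or.inl rfl, heMZ⟩
        rw [this]
        exact mz_loopless hM hZflat hMZ e heMZ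
      · exact insert_subset (Or.inr heMZ) (hIZ.trans subset_union_left)
  have := flat_closure M' F
  rwa [hcl] at this

lemma dsum_flat_back (hZflat : M.IsFlat Z)
    (hA : (Matroid.disjointSum (M.restrict Z) MZ hdisj).IsFlat A) (hAZ : A ⊆ Z) :
    M.IsFlat A := by
  set M' := Matroid.disjointSum (M.restrict Z) MZ hdisj with hM'
  have hAE : A ⊆ M.E := hAZ.trans hZflat.subset_ground
  obtain ⟨I, hI⟩ := M.exists_isBasis A hAE
  have hB' : M'.IsBasis I A := dsum_basis_left hI hAZ hZflat.subset_ground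
  have hcl : M.closure A = A := by
    refine subset_antisymm ?_ (M.subset_closure A hAE)
    intro e he
    by_cases heI : e ∈ I
    · exact hI.subset heI
    have heZ : e ∈ Z := by
      have : M.closure A ⊆ Z := by
        rw [← hZflat.closure]
        exact M.closure_subset_closure hAZ
      exact this he
    have hdepM : M.Dep (insert e I) := by
      refine hI.indep.insert_dep_iff.mpr ⟨?_, heI⟩
      rwa [hI.closure_eq_closure]
    have hdep' : M'.Dep (insert e I) := by
      rw [Dep]
      constructor
      · intro hind
        exact hdepM.not_indep ((dsum_indep_left (insert_subset heZ (hI.subset.trans hAZ))).mp hind)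
      · rw [dsum_ground_eq']
        exact insert_subset (Or.inl heZ) ((hI.subset.trans hAZ).trans subset_union_left)
    have : e ∈ M'.closure I := hB'.indep.mem_closure_iff.mpr (Or.inl hdep')
    rw [hB'.closure_eq_closure, hA.closure] at this
    exact this
  have := flat_closure M A
  rwa [hcl] at this

lemma mz_closure_sub (hMZ : IsContraction M MZ Z) (hZE : Z ⊆ M.E) (hG : G ⊆ MZ.E) :
    MZ.closure G ⊆ M.closure (G ∪ Z) := by
  obtain ⟨I, hI⟩ := MZ.exists_isBasis G hG
  have hGE : G ∪ Z ⊆ M.E := union_subset (hG.trans (by rw [hMZ.1]; exact diff_subset)) hZE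
  rw [← hI.closure_eq_closure]
  intro e he
  by_cases heI : e ∈ I
  · exact M.subset_closure (G ∪ Z) hGE (Or.inl (hI.subset heI))
  have heMZ : e ∈ MZ.E := closure_subset_ground MZ I he
  have heE : e ∈ M.E := by
    rw [hMZ.1] at heMZ
    exact heMZ.1
  have heZ : e ∉ Z := by
    rw [hMZ.1] at heMZ
    exact heMZ.2
  rw [hI.indep.mem_closure_iff] at he
  rcases he with hdep | h
  swap
  · exact absurd h heI
  by_contra hecl
  obtain ⟨hIsub, J, hJ, hIJ⟩ := (hMZ.2 I).mp hI.indep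
  have hJZ : J ⊆ Z := hJ.subset
  have hIJsub : I ∪ J ⊆ G ∪ Z := union_subset ((hI.subset).trans subset_union_left)
    (hJZ.trans subset_union_right)
  have hnotcl : e ∉ M.closure (I ∪ J) := fun h => hecl (M.closure_subset_closure hIJsub h)
  have heIJ : e ∉ I ∪ J := by
    rintro (h | h)
    exacts [heI h, heZ (hJZ h)]
  have hins : M.Indep (insert e (I ∪ J)) :=
    (hIJ.insert_indep_iff_of_notMem heIJ).mpr ⟨heE, hnotcl⟩
  refine hdep.not_indep ((hMZ.2 (insert e I)).mpr ⟨insert_subset (by rw [← hMZ.1]; exact heMZ) hIsub,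
    J, hJ, ?_⟩)
  rw [insert_union]
  exact hins

lemma dsum_flat_G (hM : MLoopless M) (hZflat : M.IsFlat Z) (hMZ : IsContraction M MZ Z)
    (hG : G ⊆ M.E \ Z) (hcl : M.closure (G ∪ Z) = G ∪ Z) :
    (Matroid.disjointSum (M.restrict Z) MZ hdisj).IsFlat G := by
  set M' := Matroid.disjointSum (M.restrict Z) MZ hdisj with hM'
  have hGMZ : G ⊆ MZ.E := by rw [hMZ.1]; exact hG
  have hGZ : ∀ t ∈ G, t ∉ Z := fun t ht => (hG ht).2
  obtain ⟨I, hI⟩ := MZ.exists_isBasis G hGMZ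
  have hB' : M'.IsBasis I G := by
    rw [hM', disjointSum_isBasis_iff, restrict_ground_eq]
    have hIZ : I ∩ Z = ∅ := by
      rw [((hdZ hdisj).symm.mono_left (hI.subset.trans hGMZ)).inter_eq]
    have hGZ' : G ∩ Z = ∅ := by
      rw [((hdZ hdisj).symm.mono_left hGMZ).inter_eq]
    refine ⟨?_, ?_, hI.subset, hGMZ.trans subset_union_right⟩
    · rw [hIZ, hGZ']
      exact (M.restrict Z).empty_indep.isBasis_self
    · rw [inter_eq_left.mpr (hI.subset.trans hGMZ), inter_eq_left.mpr hGMZ]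
      exact hI
  have hclG : M'.closure G = G := by
    refine subset_antisymm ?_ (M'.subset_closure G (hGMZ.trans (subset_union_right.trans
      dsum_ground_eq'.symm.subset)))
    rw [← hB'.closure_eq_closure]
    intro e he
    by_cases heI : e ∈ I
    · exact hI.subset heI
    have heE' : e ∈ M'.E := mem_ground_of_mem_closure he
    rw [hB'.indep.mem_closure_iff] at he
    rcases he with hdep | h
    swap
    · exact absurd h heI
    rw [dsum_ground_eq'] at heE'
    rcases heE' with heZ | heMZ
    · exfalso
      refine hdep.not_indep ?_
      rw [hM', disjointSum_indep_iff, restrict_ground_eq]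
      have heMZ' : e ∉ MZ.E := fun h => (hdZ hdisj).ne_of_mem heZ h rfl
      have hIZ' : ∀ t ∈ I, t ∉ Z := fun t ht h =>
        (hdZ hdisj).ne_of_mem h (hI.subset.trans hGMZ ht) rfl
      refine ⟨?_, ?_, ?_⟩
      · have : insert e I ∩ Z = {e} := by
          ext t
          simp only [mem_inter_iff, mem_insert_iff, mem_singleton_iff]
          constructor
          · rintro ⟨rfl | h, h2⟩
            · rfl
            · exact absurd h2 (hIZ' t h)
          · rintro rfl
            exact ⟨Or.inl rfl, heZ⟩
        rw [this]
        exact restrict_indep_iff.mpr ⟨hM e (hZflat.subset_ground heZ),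
          singleton_subset_iff.mpr heZ⟩
      · have : insert e I ∩ MZ.E = I := by
          ext t
          simp only [mem_inter_iff, mem_insert_iff, mem_singleton_iff]
          constructor
          · rintro ⟨rfl | h, h2⟩
            · exact absurd h2 heMZ'
            · exact h
          · intro h
            exact ⟨Or.inr h, hI.subset.trans hGMZ h⟩
        rw [this]
        exact hI.indep
      · exact insert_subset (Or.inl heZ) ((hI.subset.trans hGMZ).trans subset_union_right)
    · -- e on the contraction side
      have hMZdep : MZ.Dep (insert e I) := by
        rw [Dep, and_iff_left (insert_subset heMZ (hI.subset.trans hGMZ))]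
        intro hind
        refine hdep.not_indep ?_
        rw [hM', disjointSum_indep_iff, restrict_ground_eq]
        have hins_sub : insert e I ⊆ MZ.E := insert_subset heMZ (hI.subset.trans hGMZ)
        refine ⟨?_, ?_, ?_⟩
        · rw [((hdZ hdisj).symm.mono_left hins_sub).inter_eq]
          exact (M.restrict Z).empty_indep
        · rw [inter_eq_left.mpr hins_sub]
          exact hind
        · exact hins_sub.trans subset_union_right
      have : e ∈ MZ.closure I := hI.indep.mem_closure_iff.mpr (Or.inl hMZdep)
      have h2 : e ∈ MZ.closure G := (MZ.closure_subset_closure hI.subset) this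
      have h3 : e ∈ M.closure (G ∪ Z) := mz_closure_sub hMZ hZflat.subset_ground hGMZ h2
      rw [hcl] at h3
      rcases h3 with h | h
      · exact h
      · exact absurd h (fun hh => (hdZ hdisj).ne_of_mem hh heMZ rfl)
  have := flat_closure M' G
  rwa [hclG] at this

lemma dsum_mrank_left (hAZ : A ⊆ Z) :
    mrank (Matroid.disjointSum (M.restrict Z) MZ hdisj) A = mrank M A := by
  unfold mrank
  congr 1
  ext n
  constructor
  · rintro ⟨I, hIS, hind, rfl⟩
    exact ⟨I, hIS, (dsum_indep_left (hIS.trans hAZ)).mp hind, rfl⟩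
  · rintro ⟨I, hIS, hind, rfl⟩
    exact ⟨I, hIS, (dsum_indep_left (hIS.trans hAZ)).mpr hind, rfl⟩

lemma dsum_atom_iff (hM : MLoopless M) (hZflat : M.IsFlat Z) (hMZ : IsContraction M MZ Z)
    (hAZ : A ⊆ Z) :
    IsAtomFlat M A ↔ IsAtomFlat (Matroid.disjointSum (M.restrict Z) MZ hdisj) A := by
  constructor
  · rintro ⟨hflat, hr⟩
    exact ⟨dsum_flat_left hM hZflat hMZ hflat hAZ, by rwa [dsum_mrank_left hAZ]⟩
  · rintro ⟨hflat, hr⟩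
    exact ⟨dsum_flat_back hZflat hflat hAZ, by rwa [dsum_mrank_left hAZ] at hr⟩

end PartF

section PartD
variable [Fintype α] {M : Matroid α} {B N : Set (Set α)} {W X Y Z : Set α}

lemma inter_empty_absurd {X Y : Set α} (h : X ∩ Y = ∅) {t : α} (h1 : t ∈ X) (h2 : t ∈ Y) :
    False := by
  have ht : t ∈ X ∩ Y := ⟨h1, h2⟩
  rw [h] at ht
  exact ht

lemma nested_incomp (hN : IsNested M B N) (hX : X ∈ N) (hY : Y ∈ N)
    (h1 : ¬ X ⊆ Y) (h2 : ¬ Y ⊆ X) : M.closure (X ∪ Y) ∉ B := by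
  have hXY : X ≠ Y := fun h => h1 (h ▸ Subset.rfl)
  have hpair : ({X, Y} : Set (Set α)).Pairwise Incomp := by
    intro s hs t ht hst
    rcases hs with rfl | hs
    · rcases ht with rfl | ht
      · exact absurd rfl hst
      · rw [mem_singleton_iff] at ht
        subst ht
        exact ⟨h1, h2⟩
    · rw [mem_singleton_iff] at hs
      subst hs
      rcases ht with rfl | ht
      · exact ⟨h2, h1⟩
      · rw [mem_singleton_iff] at ht
        subst ht
        exact absurd rfl hst
  have := hN.2.2 {X, Y} (by
    intro t ht
    rcases ht with rfl | ht
    · exact hX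
    · rw [mem_singleton_iff] at ht
      exact ht ▸ hY) (Set.nontrivial_pair hXY) hpair
  rwa [Set.sUnion_pair] at this

lemma nested_comp (hB : IsBuildingSet M B) (hN : IsNested M B N) (hX : X ∈ N) (hY : Y ∈ N)
    (hne : (X ∩ Y).Nonempty) : X ⊆ Y ∨ Y ⊆ X := by
  by_contra h
  push_neg at h
  exact nested_incomp hN hX hY h.1 h.2 (hB.2.2 X (hN.1 hX) Y (hN.1 hY) hne)

lemma key_closure (hM : MLoopless M) (hB : IsBuildingSet M B) (hN : IsNested M B N)
    (hW : W ∈ N) (hZN : Z ∈ N) (hWZ : W ∩ Z = ∅) : M.closure (W ∪ Z) = W ∪ Z := by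
  have hWflat := (hB.1 W (hN.1 hW)).1
  have hZflat := (hB.1 Z (hN.1 hZN)).1
  have hWne := (hB.1 W (hN.1 hW)).2
  have hZne := (hB.1 Z (hN.1 hZN)).2
  have hsub : W ∪ Z ⊆ M.E := union_subset hWflat.subset_ground hZflat.subset_ground
  refine subset_antisymm ?_ (M.subset_closure _ hsub)
  intro e he
  by_contra heWZ
  obtain ⟨I, hI⟩ := M.exists_isBasis (W ∪ Z) hsub
  have hecl : e ∈ M.closure I := by rwa [hI.closure_eq_closure]
  obtain ⟨C', hC'mem, hminC⟩ := Set.exists_min_image {D | D ⊆ I ∧ e ∈ M.closure D}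
    Set.ncard (Set.toFinite _) ⟨I, Subset.rfl, hecl⟩
  have hC'I : C' ⊆ I := hC'mem.1
  have hC'ind : M.Indep C' := hI.indep.subset hC'I
  have heC'cl : e ∈ M.closure C' := hC'mem.2
  have hmin' : ∀ c ∈ C', e ∉ M.closure (C' \ {c}) := by
    intro c hc hmem
    have h2 := hminC _ ⟨diff_subset.trans hC'I, hmem⟩
    have h3 : (C' \ {c}).ncard < C'.ncard := Set.ncard_diff_singleton_lt_of_mem hc C'.toFinite
    omega
  have heC' : e ∉ C' := fun h => heWZ (hI.subset (hC'I h))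
  have hCW : (C' ∩ W).Nonempty := by
    rcases (C' ∩ W).eq_empty_or_nonempty with h | h
    · exfalso
      have hC'Z : C' ⊆ Z := by
        intro t ht
        rcases hI.subset (hC'I ht) with h2 | h2
        · exact absurd (inter_empty_absurd h ht h2) not_false
        · exact h2
      have : e ∈ M.closure Z := M.closure_subset_closure hC'Z heC'cl
      rw [hZflat.closure] at this
      exact heWZ (Or.inr this)
    · exact h
  have hCZ : (C' ∩ Z).Nonempty := by
    rcases (C' ∩ Z).eq_empty_or_nonempty with h | h
    · exfalso
      have hC'W : C' ⊆ W := by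
        intro t ht
        rcases hI.subset (hC'I ht) with h2 | h2
        · exact h2
        · exact absurd (inter_empty_absurd h ht h2) not_false
      have : e ∈ M.closure W := M.closure_subset_closure hC'W heC'cl
      rw [hWflat.closure] at this
      exact heWZ (Or.inl this)
    · exact h
  have hconn := conn_of_circuit hM hC'ind heC'cl heC' hmin'
  have hC'sub : C' ⊆ M.closure C' := M.subset_closure C' hC'ind.subset_ground
  have hGc_B : M.closure C' ∈ B := by
    refine hB.2.1 _ (flat_closure M C') ?_ hconn
    obtain ⟨t, ht⟩ := hCW
    exact ⟨t, hC'sub ht.1⟩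
  obtain ⟨tw, htw⟩ := hCW
  have hG1 : M.closure (M.closure C' ∪ W) ∈ B :=
    hB.2.2 _ hGc_B W (hN.1 hW) ⟨tw, hC'sub htw.1, htw.2⟩
  obtain ⟨tz, htz⟩ := hCZ
  have hG1sub : M.closure C' ∪ W ⊆ M.E :=
    union_subset (M.closure_subset_ground C') hWflat.subset_ground
  have hG2 : M.closure (M.closure (M.closure C' ∪ W) ∪ Z) ∈ B := by
    refine hB.2.2 _ hG1 Z (hN.1 hZN) ⟨tz, ?_, htz.2⟩
    exact M.subset_closure _ hG1sub (Or.inl (hC'sub htz.1))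
  have hcalc : M.closure (M.closure (M.closure C' ∪ W) ∪ Z) = M.closure (W ∪ Z) := by
    rw [closure_union_closure_left_eq, union_assoc, closure_union_closure_left_eq,
      union_eq_self_of_subset_left (hC'I.trans hI.subset)]
  rw [hcalc] at hG2
  have hnW : ¬ W ⊆ Z := by
    intro h
    obtain ⟨w, hw⟩ := hWne
    exact inter_empty_absurd hWZ hw (h hw)
  have hnZ : ¬ Z ⊆ W := by
    intro h
    obtain ⟨z, hz⟩ := hZne
    exact inter_empty_absurd hWZ (h hz) hz
  exact nested_incomp hN hW hZN hnW hnZ hG2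

lemma N_trichotomy (hB : IsBuildingSet M B) (hN : IsNested M B N) (hZN : Z ∈ N) (hWN : W ∈ N) :
    W ⊆ Z ∨ (Z ⊆ W ∧ ¬ W ⊆ Z) ∨ W ∩ Z = ∅ := by
  by_cases h1 : W ⊆ Z
  · exact Or.inl h1
  rcases (W ∩ Z).eq_empty_or_nonempty with h2 | h2
  · exact Or.inr (Or.inr h2)
  rcases nested_comp hB hN hWN hZN h2 with h | h
  · exact absurd h h1
  · exact Or.inr (Or.inl ⟨h, h1⟩)

lemma tau_subset_eq (M : Matroid α) {X Z : Set α} (h : X ⊆ Z) : tau M Z X = X := if_pos h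

lemma tau_not_subset_eq (M : Matroid α) {X Z : Set α} (h : ¬ X ⊆ Z) :
    tau M Z X = M.closure (X ∪ Z) \ Z := if_neg h

lemma tau_superset_eq {X Z : Set α} (hZX : Z ⊆ X) (hflat : M.IsFlat X) (hne : ¬ X ⊆ Z) :
    tau M Z X = X \ Z := by
  rw [tau_not_subset_eq M hne, union_eq_self_of_subset_right hZX, hflat.closure]

lemma tau_disjoint_eq (hM : MLoopless M) (hB : IsBuildingSet M B) (hN : IsNested M B N)
    (hW : W ∈ N) (hZN : Z ∈ N) (hWZ : W ∩ Z = ∅) : tau M Z W = W := by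
  have hWne := (hB.1 W (hN.1 hW)).2
  have hnW : ¬ W ⊆ Z := by
    intro h
    obtain ⟨w, hw⟩ := hWne
    exact inter_empty_absurd hWZ hw (h hw)
  rw [tau_not_subset_eq M hnW, key_closure hM hB hN hW hZN hWZ, union_diff_right]
  ext t
  simp only [mem_diff]
  constructor
  · exact fun h => h.1
  · intro h
    refine ⟨h, fun hz => ?_⟩
    exact inter_empty_absurd hWZ h hz

end PartD

section PartH
variable [Fintype α] [LinearOrder α]

lemma crossed_pair_exists {M MZ : Matroid α} {B N : Set (Set α)}
    {Z U V a b : Set α} (hdisj : Disjoint (M.restrict Z).E MZ.E)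
    (hM : MLoopless M) (hB : IsBuildingSet M B) (hN : IsNested M B N)
    (hZN : Z ∈ N) (hMZc : IsContraction M MZ Z)
    (hUN : U ∈ N) (hVN : V ∈ N) (hUV : U ⊂ V) (hUZ : U ≠ Z)
    (ha : IsMinLabel M N U a) (hb : IsMinLabel M N V b) (hlt : atomLT b a)
    (hZVpos : Z ⊂ V → ¬ U ⊂ Z) :
    ∃ U' V' Ag, U' ∈ tau M Z '' N ∧ V' ∈ tau M Z '' N ∧ U' ⊂ V' ∧
      GoodLabel (Matroid.disjointSum (M.restrict Z) MZ hdisj) (tau M Z '' N) V' Ag ∧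
      ∀ A', GoodLabel (Matroid.disjointSum (M.restrict Z) MZ hdisj) (tau M Z '' N) U' A' →
        atomLT Ag A' := by
  set M' := Matroid.disjointSum (M.restrict Z) MZ hdisj with hM'def
  set S := tau M Z '' N with hSdef
  have hZflat := (hB.1 Z (hN.1 hZN)).1
  have hZne := (hB.1 Z (hN.1 hZN)).2
  have hUflat := (hB.1 U (hN.1 hUN)).1
  have hUne := (hB.1 U (hN.1 hUN)).2
  have hVflat := (hB.1 V (hN.1 hVN)).1
  have hVne := (hB.1 V (hN.1 hVN)).2
  have hUE := hUflat.subset_ground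
  have hVE := hVflat.subset_ground
  have hZE := hZflat.subset_ground
  have hM'loop : MLoopless M' := dsum_loopless hM hZflat hMZc
  obtain ⟨β, α0, hβ, hα, hba⟩ := hlt
  have hatomb : IsAtomFlat M b := hb.1.1
  have hbV : b ⊆ V := hb.1.2.1
  have b_avoid : ∀ Y ∈ N, Y ⊂ V → ¬ b ⊆ Y := hb.1.2.2
  have hβb : β ∈ b := hβ.1
  have hβV : β ∈ V := hbV hβb
  have b_mem_flat : ∀ F, M.IsFlat F → β ∈ F → b ⊆ F :=
    fun F hF hm => hatomb.subset_flat hM hF hβb hm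
  have β_avoid : ∀ Y ∈ N, Y ⊂ V → β ∉ Y := fun Y hY hYV hm =>
    b_avoid Y hY hYV (b_mem_flat Y (hB.1 Y (hN.1 hY)).1 hm)
  have memS : ∀ W0 ∈ N, tau M Z W0 ∈ S := fun W0 h => mem_image_of_mem _ h
  have flat'_disj : ∀ W0 ∈ N, W0 ∩ Z = ∅ → M'.IsFlat W0 := by
    intro W0 hW0 hd
    refine dsum_flat_G hM hZflat hMZc ?_ (key_closure hM hB hN hW0 hZN hd)
    intro t ht
    exact ⟨(hB.1 W0 (hN.1 hW0)).1.subset_ground ht, fun hz => inter_empty_absurd hd ht hz⟩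
  have flat'_diffZ : ∀ F, M.IsFlat F → Z ⊆ F → M'.IsFlat (F \ Z) := by
    intro F hF hZF
    refine dsum_flat_G hM hZflat hMZc (fun t ht => ⟨hF.subset_ground ht.1, ht.2⟩) ?_
    rw [diff_union_of_subset hZF, hF.closure]
  -- main case split on position of V relative to Z
  rcases N_trichotomy hB hN hZN hVN with hVZ | ⟨hZV, hVnZ⟩ | hVZdisj
  · -- CASE 1 : V ⊆ Z
    have hUZsub : U ⊆ Z := hUV.subset.trans hVZ
    refine ⟨U, V, b, ?_, ?_, hUV, ?_, ?_⟩
    · exact (mem_image _ _ _).mpr ⟨U, hUN, tau_subset_eq M hUZsub⟩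
    · exact (mem_image _ _ _).mpr ⟨V, hVN, tau_subset_eq M hVZ⟩
    · -- b is good for V in (M', S)
      refine ⟨(dsum_atom_iff hM hZflat hMZc (hbV.trans hVZ)).mp hatomb, hbV, ?_⟩
      rintro T ⟨W0, hW0N, rfl⟩ hTV hbT
      by_cases hW0Z : W0 ⊆ Z
      · rw [tau_subset_eq M hW0Z] at hTV hbT
        exact b_avoid W0 hW0N hTV hbT
      · rw [tau_not_subset_eq M hW0Z] at hTV
        obtain ⟨w, hwW0, hwZ⟩ := not_subset.mp hW0Z
        have hwT : w ∈ M.closure (W0 ∪ Z) \ Z :=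
          ⟨M.subset_closure _ (union_subset (hB.1 W0 (hN.1 hW0N)).1.subset_ground hZE)
            (Or.inl hwW0), hwZ⟩
        exact hwZ (hVZ (hTV.subset hwT))
    · -- every good label of U in (M', S) is strictly above b
      intro A' hA'
      have hA'Z : A' ⊆ Z := hA'.2.1.trans hUZsub
      have hA'M : IsAtomFlat M A' := (dsum_atom_iff hM hZflat hMZc hA'Z).mpr hA'.1
      have hA'good : GoodLabel M N U A' := by
        refine ⟨hA'M, hA'.2.1, ?_⟩
        intro Y hYN hYU hsub
        have hYZ : Y ⊆ Z := hYU.subset.trans hUZsub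
        refine hA'.2.2 (tau M Z Y) (memS Y hYN) ?_ ?_
        · rw [tau_subset_eq M hYZ]
          exact hYU
        · rw [tau_subset_eq M hYZ]
          exact hsub
      obtain ⟨x, y, hx, hy, hxy⟩ := ha.2 A' hA'good
      exact ⟨β, y, hβ, hy, lt_of_lt_of_le hba (hα.unique hx ▸ hxy)⟩
  · -- Z ⊆ V and ¬ V ⊆ Z
    have hZVss : Z ⊂ V := ssubset_iff_subset_ne.mpr ⟨hZV, fun h => hVnZ (h ▸ Subset.rfl)⟩
    have hβnZ : β ∉ Z := β_avoid Z hZN hZVss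
    have hβE' : β ∈ M'.E := by
      rw [hM'def, dsum_ground_eq', hMZc.1]
      exact Or.inr ⟨hVE hβV, hβnZ⟩
    have hβAg : β ∈ M'.closure {β} := M'.mem_closure_self β hβE'
    have hAgatom : IsAtomFlat M' (M'.closure {β}) := closure_singleton_atom hM'loop hβE'
    -- the good label for V \ Z
    have hAgGood : GoodLabel M' S (V \ Z) (M'.closure {β}) := by
      have hVZ'flat : M'.IsFlat (V \ Z) := flat'_diffZ V hVflat hZV
      have hAgsub : M'.closure {β} ⊆ V \ Z := by
        rw [← hVZ'flat.closure]
        exact M'.closure_subset_closure (singleton_subset_iff.mpr ⟨hβV, hβnZ⟩)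
      refine ⟨hAgatom, hAgsub, ?_⟩
      rintro T ⟨W0, hW0N, rfl⟩ hTV hAgT
      rcases N_trichotomy hB hN hZN hW0N with h1 | ⟨h2a, h2b⟩ | h3
      · rw [tau_subset_eq M h1] at hAgT
        exact hβnZ (h1 (hAgT hβAg))
      · rw [tau_superset_eq h2a (hB.1 W0 (hN.1 hW0N)).1 h2b] at hAgT hTV
        have hW0V : W0 ⊆ V := by
          intro t ht
          by_cases htZ : t ∈ Z
          · exact hZV htZ
          · exact (hTV.subset ⟨ht, htZ⟩).1
        have hW0ne : W0 ≠ V := by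
          rintro rfl
          exact hTV.ne rfl
        exact b_avoid W0 hW0N (ssubset_iff_subset_ne.mpr ⟨hW0V, hW0ne⟩)
          (b_mem_flat W0 (hB.1 W0 (hN.1 hW0N)).1 (hAgT hβAg).1)
      · rw [tau_disjoint_eq hM hB hN hW0N hZN h3] at hAgT hTV
        have hW0V : W0 ⊂ V := ssubset_of_ssubset_of_subset hTV diff_subset
        exact b_avoid W0 hW0N hW0V
          (b_mem_flat W0 (hB.1 W0 (hN.1 hW0N)).1 (hAgT hβAg))
    -- now split on position of U
    rcases N_trichotomy hB hN hZN hUN with hUZ' | ⟨hZU, hUnZ⟩ | hUZdisj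
    · -- U ⊆ Z : impossible by the listing position of Z
      exact absurd (ssubset_iff_subset_ne.mpr ⟨hUZ', hUZ⟩) (hZVpos hZVss)
    · -- CASE 2A : Z ⊆ U
      have hUtau : tau M Z U = U \ Z := tau_superset_eq hZU hUflat hUnZ
      have hVtau : tau M Z V = V \ Z := tau_superset_eq hZV hVflat hVnZ
      refine ⟨U \ Z, V \ Z, M'.closure {β}, ?_, ?_, ?_, hAgGood, ?_⟩
      · exact (mem_image _ _ _).mpr ⟨U, hUN, hUtau⟩
      · exact (mem_image _ _ _).mpr ⟨V, hVN, hVtau⟩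
      · refine ssubset_iff_subset_ne.mpr ⟨diff_subset_diff_left hUV.subset, ?_⟩
        intro h
        have : U = V := by
          rw [← diff_union_of_subset hZU, ← diff_union_of_subset hZV, h]
        exact hUV.ne this
      · -- lower bound for good labels of U \ Z
        intro A' hA'
        obtain ⟨e, he⟩ := exists_isLeast hA'.1.nonempty
        have heU' : e ∈ U \ Z := hA'.2.1 he.1
        have hA'eq : A' = M'.closure {e} := hA'.1.eq_closure_of_mem hM'loop he.1
        have hα0e : α0 ≤ e := by
          by_contra hlt2
          push_neg at hlt2
          have heE : e ∈ M.E := hUE heU'.1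
          have hclsub : M.closure {e} ⊆ U := by
            rw [← hUflat.closure]
            exact M.closure_subset_closure (singleton_subset_iff.mpr heU'.1)
          have hnotgood : ¬ GoodLabel M N U (M.closure {e}) := by
            intro hgood
            obtain ⟨x, y, hx, hy, hxy⟩ := ha.2 _ hgood
            have : α0 ≤ e := le_trans (hα.unique hx ▸ hxy) (hy.2 (M.mem_closure_self e heE))
            exact absurd this (not_le_of_gt hlt2)
          have hW0ex : ∃ W0 ∈ N, W0 ⊂ U ∧ M.closure {e} ⊆ W0 := by
            by_contra hno
            push_neg at hno
            exact hnotgood ⟨closure_singleton_atom hM heE, hclsub,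
              fun Y hY hYU hsub => (hno Y hY hYU) hsub⟩
          obtain ⟨W0, hW0N, hW0U, heW0cl⟩ := hW0ex
          have heW0 : e ∈ W0 := heW0cl (M.mem_closure_self e heE)
          rcases N_trichotomy hB hN hZN hW0N with h1 | ⟨h2a, h2b⟩ | h3
          · exact heU'.2 (h1 heW0)
          · have hW0flat := (hB.1 W0 (hN.1 hW0N)).1
            have hTss : W0 \ Z ⊂ U \ Z := by
              refine ssubset_iff_subset_ne.mpr ⟨diff_subset_diff_left hW0U.subset, ?_⟩
              intro h
              have : W0 = U := by
                rw [← diff_union_of_subset h2a, ← diff_union_of_subset hZU, h]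
              exact hW0U.ne this
            refine hA'.2.2 (tau M Z W0) (memS W0 hW0N) ?_ ?_
            · rw [tau_superset_eq h2a hW0flat h2b]
              exact hTss
            · rw [tau_superset_eq h2a hW0flat h2b, hA'eq, ← (flat'_diffZ W0 hW0flat h2a).closure]
              exact M'.closure_subset_closure (singleton_subset_iff.mpr ⟨heW0, heU'.2⟩)
          · have hTss : W0 ⊂ U \ Z := by
              refine ssubset_iff_subset_ne.mpr ⟨?_, ?_⟩
              · intro t ht
                exact ⟨hW0U.subset ht, fun hz => inter_empty_absurd h3 ht hz⟩
              · intro h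
                have hkey := key_closure hM hB hN hW0N hZN h3
                have hUnion : W0 ∪ Z = U := by
                  rw [h, diff_union_of_subset hZU]
                have hW0ne' := (hB.1 W0 (hN.1 hW0N)).2
                have hnW : ¬ W0 ⊆ Z := fun hs => by
                  obtain ⟨w, hw⟩ := hW0ne'
                  exact inter_empty_absurd h3 hw (hs hw)
                have hnZ : ¬ Z ⊆ W0 := fun hs => by
                  obtain ⟨z, hz⟩ := hZne
                  exact inter_empty_absurd h3 (hs hz) hz
                have := nested_incomp hN hW0N hZN hnW hnZ
                rw [hkey, hUnion] at this
                exact this (hN.1 hUN)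
            refine hA'.2.2 (tau M Z W0) (memS W0 hW0N) ?_ ?_
            · rw [tau_disjoint_eq hM hB hN hW0N hZN h3]
              exact hTss
            · rw [tau_disjoint_eq hM hB hN hW0N hZN h3, hA'eq,
                ← (flat'_disj W0 hW0N h3).closure]
              exact M'.closure_subset_closure (singleton_subset_iff.mpr heW0)
        obtain ⟨γ, hγ⟩ := exists_isLeast hAgatom.nonempty
        exact ⟨γ, e, hγ, he, lt_of_le_of_lt (hγ.2 hβAg) (lt_of_lt_of_le hba hα0e)⟩
    · -- CASE 2B-i : U ∩ Z = ∅ and Z ⊆ V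
      have hUtau : tau M Z U = U := tau_disjoint_eq hM hB hN hUN hZN hUZdisj
      have hVtau : tau M Z V = V \ Z := tau_superset_eq hZV hVflat hVnZ
      have hnUZ : ¬ U ⊆ Z := fun hs => by
        obtain ⟨u, hu⟩ := hUne
        exact inter_empty_absurd hUZdisj hu (hs hu)
      have hnZU : ¬ Z ⊆ U := fun hs => by
        obtain ⟨z, hz⟩ := hZne
        exact inter_empty_absurd hUZdisj (hs hz) hz
      refine ⟨U, V \ Z, M'.closure {β}, ?_, ?_, ?_, hAgGood, ?_⟩
      · exact (mem_image _ _ _).mpr ⟨U, hUN, hUtau⟩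
      · exact (mem_image _ _ _).mpr ⟨V, hVN, hVtau⟩
      · refine ssubset_iff_subset_ne.mpr ⟨?_, ?_⟩
        · intro t ht
          exact ⟨hUV.subset ht, fun hz => inter_empty_absurd hUZdisj ht hz⟩
        · intro h
          have hUnion : U ∪ Z = V := by
            rw [h, diff_union_of_subset hZV]
          have hkey : M.closure (U ∪ Z) = V := by
            rw [hUnion, hVflat.closure]
          have := nested_incomp hN hUN hZN hnUZ hnZU
          rw [hkey] at this
          exact this (hN.1 hVN)
      · -- lower bound for good labels of U
        intro A' hA'
        obtain ⟨e, he⟩ := exists_isLeast hA'.1.nonempty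
        have heU : e ∈ U := hA'.2.1 he.1
        have heZ : e ∉ Z := fun hz => inter_empty_absurd hUZdisj heU hz
        have hA'eq : A' = M'.closure {e} := hA'.1.eq_closure_of_mem hM'loop he.1
        have hα0e : α0 ≤ e := by
          by_contra hlt2
          push_neg at hlt2
          have heE : e ∈ M.E := hUE heU
          have hclsub : M.closure {e} ⊆ U := by
            rw [← hUflat.closure]
            exact M.closure_subset_closure (singleton_subset_iff.mpr heU)
          have hnotgood : ¬ GoodLabel M N U (M.closure {e}) := by
            intro hgood
            obtain ⟨x, y, hx, hy, hxy⟩ := ha.2 _ hgood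
            have : α0 ≤ e := le_trans (hα.unique hx ▸ hxy) (hy.2 (M.mem_closure_self e heE))
            exact absurd this (not_le_of_gt hlt2)
          have hW0ex : ∃ W0 ∈ N, W0 ⊂ U ∧ M.closure {e} ⊆ W0 := by
            by_contra hno
            push_neg at hno
            exact hnotgood ⟨closure_singleton_atom hM heE, hclsub,
              fun Y hY hYU hsub => (hno Y hY hYU) hsub⟩
          obtain ⟨W0, hW0N, hW0U, heW0cl⟩ := hW0ex
          have heW0 : e ∈ W0 := heW0cl (M.mem_closure_self e heE)
          rcases N_trichotomy hB hN hZN hW0N with h1 | ⟨h2a, h2b⟩ | h3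
          · exact heZ (h1 heW0)
          · obtain ⟨z, hz⟩ := hZne
            exact inter_empty_absurd hUZdisj (hW0U.subset (h2a hz)) hz
          · refine hA'.2.2 (tau M Z W0) (memS W0 hW0N) ?_ ?_
            · rw [tau_disjoint_eq hM hB hN hW0N hZN h3]
              exact hW0U
            · rw [tau_disjoint_eq hM hB hN hW0N hZN h3, hA'eq,
                ← (flat'_disj W0 hW0N h3).closure]
              exact M'.closure_subset_closure (singleton_subset_iff.mpr heW0)
        obtain ⟨γ, hγ⟩ := exists_isLeast hAgatom.nonempty
        exact ⟨γ, e, hγ, he, lt_of_le_of_lt (hγ.2 hβAg) (lt_of_lt_of_le hba hα0e)⟩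
  · -- CASE 2B-ii : V ∩ Z = ∅ (hence U ∩ Z = ∅)
    have hUZdisj : U ∩ Z = ∅ := by
      rw [← subset_empty_iff, ← hVZdisj]
      exact inter_subset_inter_left Z hUV.subset
    have hUtau : tau M Z U = U := tau_disjoint_eq hM hB hN hUN hZN hUZdisj
    have hVtau : tau M Z V = V := tau_disjoint_eq hM hB hN hVN hZN hVZdisj
    have hβnZ : β ∉ Z := fun hz => inter_empty_absurd hVZdisj hβV hz
    have hβE' : β ∈ M'.E := by
      rw [hM'def, dsum_ground_eq', hMZc.1]
      exact Or.inr ⟨hVE hβV, hβnZ⟩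
    have hβAg : β ∈ M'.closure {β} := M'.mem_closure_self β hβE'
    have hAgatom : IsAtomFlat M' (M'.closure {β}) := closure_singleton_atom hM'loop hβE'
    have hVflat' : M'.IsFlat V := flat'_disj V hVN hVZdisj
    refine ⟨U, V, M'.closure {β}, ?_, ?_, hUV, ?_, ?_⟩
    · exact (mem_image _ _ _).mpr ⟨U, hUN, hUtau⟩
    · exact (mem_image _ _ _).mpr ⟨V, hVN, hVtau⟩
    · -- Ag is good for V
      have hAgsub : M'.closure {β} ⊆ V := by
        rw [← hVflat'.closure]
        exact M'.closure_subset_closure (singleton_subset_iff.mpr hβV)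
      refine ⟨hAgatom, hAgsub, ?_⟩
      rintro T ⟨W0, hW0N, rfl⟩ hTV hAgT
      rcases N_trichotomy hB hN hZN hW0N with h1 | ⟨h2a, h2b⟩ | h3
      · rw [tau_subset_eq M h1] at hAgT
        exact hβnZ (h1 (hAgT hβAg))
      · rw [tau_superset_eq h2a (hB.1 W0 (hN.1 hW0N)).1 h2b] at hAgT hTV
        obtain ⟨w, hwW0, hwZ⟩ := not_subset.mp h2b
        have hwV : w ∈ V := hTV.subset ⟨hwW0, hwZ⟩
        rcases nested_comp hB hN hW0N hVN ⟨w, hwW0, hwV⟩ with h | h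
        · obtain ⟨z, hz⟩ := hZne
          exact inter_empty_absurd hVZdisj (h (h2a hz)) hz
        · have hVW0Z : V ⊆ W0 \ Z := fun t ht =>
            ⟨h ht, fun hz => inter_empty_absurd hVZdisj ht hz⟩
          exact hTV.ne (subset_antisymm hTV.subset hVW0Z)
      · rw [tau_disjoint_eq hM hB hN hW0N hZN h3] at hAgT hTV
        exact b_avoid W0 hW0N hTV (b_mem_flat W0 (hB.1 W0 (hN.1 hW0N)).1 (hAgT hβAg))
    · -- lower bound for good labels of U
      intro A' hA'
      obtain ⟨e, he⟩ := exists_isLeast hA'.1.nonempty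
      have heU : e ∈ U := hA'.2.1 he.1
      have heZ : e ∉ Z := fun hz => inter_empty_absurd hUZdisj heU hz
      have hA'eq : A' = M'.closure {e} := hA'.1.eq_closure_of_mem hM'loop he.1
      have hα0e : α0 ≤ e := by
        by_contra hlt2
        push_neg at hlt2
        have heE : e ∈ M.E := hUE heU
        have hclsub : M.closure {e} ⊆ U := by
          rw [← hUflat.closure]
          exact M.closure_subset_closure (singleton_subset_iff.mpr heU)
        have hnotgood : ¬ GoodLabel M N U (M.closure {e}) := by
          intro hgood
          obtain ⟨x, y, hx, hy, hxy⟩ := ha.2 _ hgood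
          have : α0 ≤ e := le_trans (hα.unique hx ▸ hxy) (hy.2 (M.mem_closure_self e heE))
          exact absurd this (not_le_of_gt hlt2)
        have hW0ex : ∃ W0 ∈ N, W0 ⊂ U ∧ M.closure {e} ⊆ W0 := by
          by_contra hno
          push_neg at hno
          exact hnotgood ⟨closure_singleton_atom hM heE, hclsub,
            fun Y hY hYU hsub => (hno Y hY hYU) hsub⟩
        obtain ⟨W0, hW0N, hW0U, heW0cl⟩ := hW0ex
        have heW0 : e ∈ W0 := heW0cl (M.mem_closure_self e heE)
        rcases N_trichotomy hB hN hZN hW0N with h1 | ⟨h2a, h2b⟩ | h3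
        · exact heZ (h1 heW0)
        · obtain ⟨z, hz⟩ := hZne
          exact inter_empty_absurd hUZdisj (hW0U.subset (h2a hz)) hz
        · refine hA'.2.2 (tau M Z W0) (memS W0 hW0N) ?_ ?_
          · rw [tau_disjoint_eq hM hB hN hW0N hZN h3]
            exact hW0U
          · rw [tau_disjoint_eq hM hB hN hW0N hZN h3, hA'eq,
              ← (flat'_disj W0 hW0N h3).closure]
            exact M'.closure_subset_closure (singleton_subset_iff.mpr heW0)
      obtain ⟨γ, hγ⟩ := exists_isLeast hAgatom.nonempty
      exact ⟨γ, e, hγ, he, lt_of_le_of_lt (hγ.2 hβAg) (lt_of_lt_of_le hba hα0e)⟩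

end PartH


/-- if the NL-labeling of `N` has a descent at a flat `X ≠ Z`, then the
NL-labeling of `τ_Z(N)`, computed with respect to the direct sum of `M|Z` and `M/Z`
and the building set `B|_Z ∪ B^Z`, has a descent. -/
theorem descent_preserved_by_tau {α : Type*} [Fintype α] [LinearOrder α]
    (M MZ : Matroid α) (hM : MLoopless M)
    (B : Set (Set α)) (hB : IsBuildingSet M B)
    (N : Set (Set α)) (hN : IsNested M B N)
    (Z : Set α) (hZ : Z ∈ N) (hZm : Z ∉ maxB B)
    (hMZ : IsContraction M MZ Z)
    (hdisj : Disjoint (M.restrict Z).E MZ.E)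
    (htau : IsNested (Matroid.disjointSum (M.restrict Z) MZ hdisj)
      ({Y | Y ∈ B ∧ Y ⊆ Z} ∪ {W | ∃ Y ∈ B, ¬ Y ⊆ Z ∧ W = M.closure (Y ∪ Z) \ Z})
      (tau M Z '' N))
    (P : List (Set α × Set α)) (hP : NLListing M N N P)
    (X : Set α) (hXN : X ∈ N) (hXZ : X ≠ Z)
    (hdesc : ∃ i, ∃ h : i + 1 < P.length,
      (P.get ⟨i, Nat.lt_of_succ_lt h⟩).1 = X ∧
      atomLT (P.get ⟨i + 1, h⟩).2 (P.get ⟨i, Nat.lt_of_succ_lt h⟩).2) :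
    ∀ Q, NLListing (Matroid.disjointSum (M.restrict Z) MZ hdisj) (tau M Z '' N)
        (tau M Z '' N) Q →
      ∃ i, HasDescentAt (Q.map Prod.snd) i := by
  intro Q hQ
  obtain ⟨i, h, hfst, hlt⟩ := hdesc
  obtain ⟨R', hlist, hsub, hinv⟩ := NL_drop hP i
  rw [List.drop_eq_getElem_cons (Nat.lt_of_succ_lt h)] at hlist
  obtain ⟨hUmem, hUmin, hUlab, hUcond, hrest⟩ := NL_cons_inv hlist
  rw [List.drop_eq_getElem_cons h] at hrest
  obtain ⟨hVmem, hVmin, hVlab, hVcond, _⟩ := NL_cons_inv hrest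
  simp only [List.get_eq_getElem] at hfst hlt
  set pU := P[i]'(Nat.lt_of_succ_lt h) with hpU
  set pV := P[i+1]'h with hpV
  -- pU.1 = X
  rw [hfst] at hUmem hUmin hUlab
  -- derive X ⊂ pV.1
  have hUV : X ⊂ pV.1 := by
    have hnotmin : ¬ ∀ W ∈ R', W ⊆ pV.1 → W = pV.1 := by
      intro hVminR'
      exact atomLT_asymm_of_LE hlt
        (hUcond pV.1 (diff_subset hVmem) hVminR' pV.2 hVlab)
    push_neg at hnotmin
    obtain ⟨W, hWR', hWsub, hWne⟩ := hnotmin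
    have hWX : W = X := by
      by_contra hne
      refine hWne (hVmin W ⟨hWR', ?_⟩ hWsub)
      rw [hfst]
      simpa using hne
    rw [hWX] at hWsub hWne
    exact ssubset_iff_subset_ne.mpr ⟨hWsub, hWne⟩
  -- Z cannot lie strictly between X and pV.1
  have hZpos : Z ⊂ pV.1 → ¬ X ⊂ Z := by
    intro hZV hXZss
    have hZR'2 : Z ∉ R' := by
      intro hmem
      refine hZV.ne (hVmin Z ⟨hmem, ?_⟩ hZV.subset)
      rw [hfst]
      simpa using fun hc => hXZ hc.symm
    have := hinv Z hZ hZR'2 X hUmem hXZss.subset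
    exact hXZss.ne this
  have hVN : pV.1 ∈ N := hsub (diff_subset hVmem)
  obtain ⟨U', V', Ag, hU'S, hV'S, hU'V', hAgGood, hlow⟩ :=
    crossed_pair_exists hdisj hM hB hN hZ hMZ hXN hVN hUV hXZ hUlab hVlab hlt hZpos
  exact NL_crossed hQ hU'S hV'S hU'V' hAgGood hlow
end

section
/- Let M be a loopless matroid on a finite ground set E, B a building set for M, and N a nested set. Then any two members of N are either comparable under inclusion or disjoint (N is a laminar family of nonempty subsets of E), and the indicator vectors {e_X : X ∈ N} are linearly independent in ℝ^E. -/
open Set Matroid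
open scoped Matroid

variable {α : Type*}

/-- a nested set is a laminar family of nonempty sets, and the
indicator vectors of its members are linearly independent in `ℝ^E`. -/
theorem nested_laminar_and_independent {α : Type*} [Fintype α] [LinearOrder α]
    (M : Matroid α) (hM : MLoopless M)
    (B : Set (Set α)) (hB : IsBuildingSet M B)
    (N : Set (Set α)) (hN : IsNested M B N) :
    (∀ X ∈ N, X.Nonempty) ∧
    (∀ X ∈ N, ∀ Y ∈ N, X ⊆ Y ∨ Y ⊆ X ∨ X ∩ Y = ∅) ∧
    LinearIndependent ℝ (fun X : N => indVec (X : Set α)) := by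
  obtain ⟨hNB, hmaxN, hnest⟩ := hN
  obtain ⟨hB1, hB2, hB3⟩ := hB
  have hne : ∀ X ∈ N, X.Nonempty := fun X hX => (hB1 X (hNB hX)).2
  have hlam : ∀ X ∈ N, ∀ Y ∈ N, X ⊆ Y ∨ Y ⊆ X ∨ X ∩ Y = ∅ := by
    intro X hX Y hY
    by_contra h
    push_neg at h
    obtain ⟨h1, h2, h3⟩ := h
    have hXY : X ≠ Y := fun e => h1 (e ▸ subset_rfl)
    have hpair : ({X, Y} : Set (Set α)).Pairwise Incomp := by
      intro a ha b hb hab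
      rcases ha with rfl | ha
      · rcases hb with rfl | hb
        · exact absurd rfl hab
        · rw [Set.mem_singleton_iff] at hb; subst hb; exact ⟨h1, h2⟩
      · rw [Set.mem_singleton_iff] at ha; subst ha
        rcases hb with rfl | hb
        · exact ⟨h2, h1⟩
        · rw [Set.mem_singleton_iff] at hb; subst hb; exact absurd rfl hab
    have hsub : ({X, Y} : Set (Set α)) ⊆ N := by
      intro Z hZ
      rcases hZ with rfl | hZ
      · exact hX
      · rw [Set.mem_singleton_iff] at hZ; subst hZ; exact hY
    have hnt : ({X, Y} : Set (Set α)).Nontrivial :=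
      ⟨X, Or.inl rfl, Y, Or.inr rfl, hXY⟩
    have hnotB := hnest {X, Y} hsub hnt hpair
    rw [Set.sUnion_pair] at hnotB
    exact hnotB (hB3 X (hNB hX) Y (hNB hY) h3)
  have hpriv : ∀ X ∈ N, ∃ a ∈ X, ∀ Y ∈ N, a ∈ Y → X ⊆ Y := by
    intro X hX
    by_contra h
    push_neg at h
    set T : Set (Set α) := {Y ∈ N | Y ⊂ X} with hT
    have hcover : X ⊆ ⋃₀ T := by
      intro a ha
      obtain ⟨Y, hYN, haY, hnXY⟩ := h a ha
      have hYX : Y ⊆ X := by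
        rcases hlam X hX Y hYN with h' | h' | h'
        · exact absurd h' hnXY
        · exact h'
        · exact absurd (Set.mem_inter ha haY) (h' ▸ id)
      refine ⟨Y, ⟨hYN, hYX.ssubset_of_ne fun e => hnXY (e ▸ subset_rfl)⟩, haY⟩
    set S : Set (Set α) := {Y ∈ T | ∀ Z ∈ T, Y ⊆ Z → Y = Z} with hS
    have hTfin : T.Finite := Set.toFinite T
    have hext : ∀ Y ∈ T, ∃ Z ∈ S, Y ⊆ Z := by
      intro Y hY
      have h1 : ({Z ∈ T | Y ⊆ Z} : Set (Set α)).Finite :=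
        hTfin.subset fun Z hZ => hZ.1
      obtain ⟨Z, hZ, hZmax⟩ := Set.Finite.exists_maximalFor id _ h1 ⟨Y, hY, subset_rfl⟩
      refine ⟨Z, ⟨hZ.1, fun W hW hZW => hZW.antisymm (hZmax ⟨hW, hZ.2.trans hZW⟩ hZW)⟩, hZ.2⟩
    have hSU : ⋃₀ S = X := by
      apply subset_antisymm
      · exact Set.sUnion_subset fun Y hY => hY.1.2.subset
      · intro a ha
        obtain ⟨Y, hY, haY⟩ := hcover ha
        obtain ⟨Z, hZ, hYZ⟩ := hext Y hY
        exact ⟨Z, hZ, hYZ haY⟩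
    have hSnt : S.Nontrivial := by
      obtain ⟨a, ha⟩ := hne X hX
      have ha' : a ∈ ⋃₀ S := hSU ▸ ha
      obtain ⟨Y, hY, haY⟩ := ha'
      obtain ⟨b, hbX, hbY⟩ := exists_of_ssubset hY.1.2
      have hb' : b ∈ ⋃₀ S := hSU ▸ hbX
      obtain ⟨Z, hZ, hbZ⟩ := hb'
      exact ⟨Z, hZ, Y, hY, fun e => hbY (e ▸ hbZ)⟩
    have hpairs : S.Pairwise Incomp := by
      intro Y hY Z hZ hYZ
      exact ⟨fun hsub => hYZ (hY.2 Z hZ.1 hsub),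
        fun hsub => hYZ.symm (hZ.2 Y hY.1 hsub)⟩
    have hSsubN : S ⊆ N := fun Y hY => hY.1.1
    have hnotB := hnest S hSsubN hSnt hpairs
    rw [hSU, (hB1 X (hNB hX)).1.closure] at hnotB
    exact hnotB (hNB hX)
  refine ⟨hne, hlam, ?_⟩
  rw [linearIndependent_iff']
  intro s g hsum i hi
  by_contra hgi
  set T : Set N := {j : N | j ∈ s ∧ g j ≠ 0} with hTdef
  have hTfin : T.Finite := s.finite_toSet.subset fun j hj => hj.1
  obtain ⟨X, hXT, hXmax⟩ :=
    Set.Finite.exists_maximalFor (fun j : N => (j : Set α)) T hTfin ⟨i, hi, hgi⟩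
  obtain ⟨a, haX, hapriv⟩ := hpriv X X.2
  have hva := congrFun hsum a
  rw [Finset.sum_apply] at hva
  have hva' : ∑ j ∈ s, g j * indVec (j : Set α) a = 0 := by
    simpa [Pi.smul_apply, smul_eq_mul] using hva
  have hsingle : ∑ j ∈ s, g j * indVec (j : Set α) a = g X * indVec (X : Set α) a := by
    apply Finset.sum_eq_single_of_mem X hXT.1
    intro j hj hjX
    by_cases hgj : g j = 0
    · rw [hgj, zero_mul]
    by_cases haj : a ∈ (j : Set α)
    · exact absurd (Subtype.ext ((hapriv _ j.2 haj).antisymm (hXmax ⟨hj, hgj⟩ (hapriv _ j.2 haj)))) (Ne.symm hjX)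
    · rw [indVec, Set.indicator_of_notMem haj, mul_zero]
  rw [hsingle, indVec, Set.indicator_of_mem haX] at hva'
  simp at hva'
  exact hXT.2 hva'
end
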